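/- Let N = ⊕_{i ∈ I} P_i be a (possibly countably infinite) direct sum of finite-rank permutation modules for an automorphism F (i.e., each P_i is finitely generated free abelian with F acting by a basis permutation). Then every eigenvalue λ ∈ ℚ_ℓ of the induced action of F on the ℓ-adic completion N ⊗̂ ℚ_ℓ is a root of unity. -/

import Mathlib

set_option maxHeartbeats 2000000
set_option synthInstance.maxHeartbeats 400000

open DirectSum TensorProduct

section helpers

variable {R : Type*} [CommRing R] {M : Type*} [AddCommGroup M] [Module R M]

lemma mem_span_singleton_smul_top {c : R} {x : M} :
    x ∈ (Ideal.span {c} : Ideal R) • (⊤ : Submodule R M) ↔ ∃ z : M, x = c • z := by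
  constructor
  · intro hx
    refine Submodule.smul_induction_on hx ?_ ?_
    · rintro r hr m -
      obtain ⟨t, rfl⟩ := Ideal.mem_span_singleton'.mp hr
      exact ⟨t • m, by rw [mul_comm, mul_smul]⟩
    · rintro x y ⟨z1, rfl⟩ ⟨z2, rfl⟩; exact ⟨z1 + z2, (smul_add _ _ _).symm⟩
  · rintro ⟨z, rfl⟩
    exact Submodule.smul_mem_smul (Ideal.mem_span_singleton_self c) trivial

lemma mem_pow_span_singleton_smul_top {c : R} {x : M} {r : ℕ} :
    x ∈ ((Ideal.span {c} : Ideal R) ^ r) • (⊤ : Submodule R M) ↔ ∃ z : M, x = c ^ r • z := by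
  rw [Ideal.span_singleton_pow, mem_span_singleton_smul_top]

end helpers

section padic

variable {p : ℕ} [Fact p.Prime] {V : Type*} [AddCommGroup V] [Module ℤ_[p] V]

lemma padic_unit_smul {c : ℤ_[p]} (hc : c ≠ 0) {v : V} (h : c • v = 0) :
    (p : ℤ_[p]) ^ (c.valuation) • v = 0 := by
  set u := PadicInt.unitCoeff hc with hu
  have hspec : c = (u : ℤ_[p]) * (p : ℤ_[p]) ^ (c.valuation) :=
    PadicInt.unitCoeff_spec hc
  have h2 : (u : ℤ_[p]) • ((p : ℤ_[p]) ^ (c.valuation) • v) = 0 := by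
    rw [← mul_smul, ← hspec]; exact h
  calc (p : ℤ_[p]) ^ (c.valuation) • v
      = ((↑u⁻¹ * ↑u : ℤ_[p])) • ((p : ℤ_[p]) ^ (c.valuation) • v) := by
        rw [Units.inv_mul, one_smul]
    _ = (↑u⁻¹ : ℤ_[p]) • ((u : ℤ_[p]) • ((p : ℤ_[p]) ^ (c.valuation) • v)) := by
        rw [mul_smul]
    _ = 0 := by rw [h2, smul_zero]

end padic

/-- If `N = ⊕ i, P i` is a countable direct sum of finite-rank permutation modules for `F`
(each `P i` finitely generated free abelian with `F` acting by a basis permutation), then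
every eigenvalue `λ ∈ ℚ_ℓ` of the induced action of `F` on the completed tensor product
`N ⊗̂ ℚ_ℓ = (lim_r N/ℓ^r N) ⊗_{ℤ_ℓ} ℚ_ℓ` is a root of unity. -/
theorem stmt_5 (ℓ : ℕ) [Fact ℓ.Prime] (I : Type) [Countable I] [DecidableEq I]
    (P : I → Type) [∀ i, AddCommGroup (P i)]
    (B : I → Type) [∀ i, Fintype (B i)] (b : ∀ i, Module.Basis (B i) ℤ (P i))
    (σ : ∀ i, Equiv.Perm (B i))
    (F : (⨁ i, P i) →ₗ[ℤ] (⨁ i, P i))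
    (hF : ∀ (i : I) (j : B i),
      F (DirectSum.lof ℤ I P i (b i j)) = DirectSum.lof ℤ I P i (b i (σ i j)))
    (lam : ℚ_[ℓ])
    (hlam : Module.End.HasEigenvalue
      (LinearMap.baseChange ℚ_[ℓ]
        ((AdicCompletion.map (Ideal.span {(ℓ : ℤ_[ℓ])})
            (F.baseChange ℤ_[ℓ])).restrictScalars ℤ_[ℓ])) lam) :
    ∃ n : ℕ, 0 < n ∧ lam ^ n = 1 := by
  classical
  have hℓ0 : (ℓ : ℤ_[ℓ]) ≠ 0 := Nat.cast_ne_zero.mpr (Fact.out (p := ℓ.Prime)).ne_zero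
  have hℓ0K : (ℓ : ℚ_[ℓ]) ≠ 0 := Nat.cast_ne_zero.mpr (Fact.out (p := ℓ.Prime)).ne_zero
  set Il : Ideal ℤ_[ℓ] := Ideal.span {(ℓ : ℤ_[ℓ])} with hIl
  set fC : AdicCompletion Il (ℤ_[ℓ] ⊗[ℤ] ⨁ i, P i) →ₗ[ℤ_[ℓ]]
      AdicCompletion Il (ℤ_[ℓ] ⊗[ℤ] ⨁ i, P i) :=
    (AdicCompletion.map Il (F.baseChange ℤ_[ℓ])).restrictScalars ℤ_[ℓ] with hfC
  obtain ⟨v, hv⟩ := hlam.exists_hasEigenvector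
  have hveq : (LinearMap.baseChange ℚ_[ℓ] fC) v = lam • v := hv.apply_eq_smul
  have hv0 : v ≠ 0 := hv.right
  -- the tensor product is the localized module
  haveI hloc : IsLocalizedModule (nonZeroDivisors ℤ_[ℓ])
      (TensorProduct.mk ℤ_[ℓ] ℚ_[ℓ] (AdicCompletion Il (ℤ_[ℓ] ⊗[ℤ] ⨁ i, P i)) 1) :=
    (isLocalizedModule_iff_isBaseChange (nonZeroDivisors ℤ_[ℓ]) ℚ_[ℓ] _).mpr
      (TensorProduct.isBaseChange _ _ _)
  -- a common-denominator eigenvector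
  obtain ⟨⟨x, s⟩, hx⟩ := IsLocalizedModule.surj (nonZeroDivisors ℤ_[ℓ])
    (TensorProduct.mk ℤ_[ℓ] ℚ_[ℓ] (AdicCompletion Il (ℤ_[ℓ] ⊗[ℤ] ⨁ i, P i)) 1) v
  have hx' : (s : ℤ_[ℓ]) • v = (1 : ℚ_[ℓ]) ⊗ₜ[ℤ_[ℓ]] x := hx
  have hx0 : x ≠ 0 := by
    intro h
    rw [h, TensorProduct.tmul_zero] at hx'
    have hs0 : (s : ℤ_[ℓ]) ≠ 0 := nonZeroDivisors.coe_ne_zero s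
    have h2 : ((algebraMap ℤ_[ℓ] ℚ_[ℓ]) (s : ℤ_[ℓ])) • v = 0 := by
      rw [algebraMap_smul]; exact hx'
    rcases smul_eq_zero.mp h2 with h' | h'
    · exact (hs0 (IsFractionRing.injective ℤ_[ℓ] ℚ_[ℓ] (by rw [h', map_zero]))).elim
    · exact hv0 h'
  have heig : (1 : ℚ_[ℓ]) ⊗ₜ[ℤ_[ℓ]] (fC x) = lam • ((1 : ℚ_[ℓ]) ⊗ₜ[ℤ_[ℓ]] x) := by
    calc (1 : ℚ_[ℓ]) ⊗ₜ[ℤ_[ℓ]] (fC x)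
        = (LinearMap.baseChange ℚ_[ℓ] fC) ((1 : ℚ_[ℓ]) ⊗ₜ[ℤ_[ℓ]] x) := by
          rw [LinearMap.baseChange_tmul]
      _ = (LinearMap.baseChange ℚ_[ℓ] fC) ((s : ℤ_[ℓ]) • v) := by rw [hx']
      _ = (s : ℤ_[ℓ]) • ((LinearMap.baseChange ℚ_[ℓ] fC) v) :=
          LinearMap.map_smul_of_tower _ _ _
      _ = (s : ℤ_[ℓ]) • (lam • v) := by rw [hveq]
      _ = lam • ((s : ℤ_[ℓ]) • v) := smul_comm _ _ _
      _ = lam • ((1 : ℚ_[ℓ]) ⊗ₜ[ℤ_[ℓ]] x) := by rw [hx']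
  -- write `lam` with denominator a power of `ℓ`
  obtain ⟨⟨a0, s0⟩, hs0⟩ := IsLocalization.surj (nonZeroDivisors ℤ_[ℓ]) lam
  have hs0ne : (s0 : ℤ_[ℓ]) ≠ 0 := nonZeroDivisors.coe_ne_zero s0
  set m0 := (s0 : ℤ_[ℓ]).valuation with hm0
  set u := PadicInt.unitCoeff hs0ne with hu
  have hspec : (s0 : ℤ_[ℓ]) = (u : ℤ_[ℓ]) * (ℓ : ℤ_[ℓ]) ^ m0 := PadicInt.unitCoeff_spec hs0ne
  set a1 : ℤ_[ℓ] := (↑u⁻¹ : ℤ_[ℓ]) * a0 with ha1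
  have hlam0 : algebraMap ℤ_[ℓ] ℚ_[ℓ] a1 = lam * (ℓ : ℚ_[ℓ]) ^ m0 := by
    have h3 : (algebraMap ℤ_[ℓ] ℚ_[ℓ]) (↑u⁻¹ : ℤ_[ℓ]) * (algebraMap ℤ_[ℓ] ℚ_[ℓ]) (↑u : ℤ_[ℓ])
        = 1 := by rw [← map_mul, Units.inv_mul, map_one]
    rw [ha1, map_mul, ← hs0, hspec, map_mul, map_pow, map_natCast]
    linear_combination (lam * (ℓ : ℚ_[ℓ]) ^ m0) * h3
  -- exact relation with denominator cleared
  have hrel0 : (1 : ℚ_[ℓ]) ⊗ₜ[ℤ_[ℓ]] ((ℓ : ℤ_[ℓ]) ^ m0 • fC x)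
      = (1 : ℚ_[ℓ]) ⊗ₜ[ℤ_[ℓ]] (a1 • x) := by
    rw [TensorProduct.tmul_smul, TensorProduct.tmul_smul, heig]
    rw [← algebraMap_smul (R := ℤ_[ℓ]) ℚ_[ℓ] ((ℓ : ℤ_[ℓ]) ^ m0),
      ← algebraMap_smul (R := ℤ_[ℓ]) ℚ_[ℓ] a1, smul_smul, hlam0, map_pow, map_natCast, mul_comm]
  obtain ⟨c, hc⟩ := IsLocalizedModule.exists_of_eq (S := nonZeroDivisors ℤ_[ℓ])
    (f := TensorProduct.mk ℤ_[ℓ] ℚ_[ℓ] (AdicCompletion Il (ℤ_[ℓ] ⊗[ℤ] ⨁ i, P i)) 1) hrel0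
  have hcne : (c : ℤ_[ℓ]) ≠ 0 := nonZeroDivisors.coe_ne_zero c
  set kk := (c : ℤ_[ℓ]).valuation with hkk
  have hc2 : (ℓ : ℤ_[ℓ]) ^ kk • ((ℓ : ℤ_[ℓ]) ^ m0 • fC x - a1 • x) = 0 := by
    refine padic_unit_smul hcne ?_
    rw [smul_sub, sub_eq_zero]
    exact hc
  set m := kk + m0 with hm
  set a := (ℓ : ℤ_[ℓ]) ^ kk * a1 with ha
  have hrel1 : (ℓ : ℤ_[ℓ]) ^ m • fC x = a • x := by
    rw [smul_sub, sub_eq_zero] at hc2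
    calc (ℓ : ℤ_[ℓ]) ^ m • fC x
        = (ℓ : ℤ_[ℓ]) ^ kk • ((ℓ : ℤ_[ℓ]) ^ m0 • fC x) := by rw [smul_smul, ← pow_add, hm]
      _ = (ℓ : ℤ_[ℓ]) ^ kk • (a1 • x) := hc2
      _ = a • x := by rw [smul_smul, ha]
  have hlama : algebraMap ℤ_[ℓ] ℚ_[ℓ] a = lam * (ℓ : ℚ_[ℓ]) ^ m := by
    rw [ha, map_mul, hlam0, map_pow, map_natCast, hm, pow_add]
    ring
  -- iterate the relation
  have hreln : ∀ n : ℕ, ((ℓ : ℤ_[ℓ]) ^ m) ^ n • ((fC ^ n) x) = a ^ n • x := by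
    intro n; induction n with
    | zero => simp
    | succ n ih =>
      have h1 : (fC ^ (n + 1)) x = fC ((fC ^ n) x) := by rw [pow_succ', Module.End.mul_apply]
      have h2 : ((ℓ : ℤ_[ℓ]) ^ m) ^ (n + 1) = (ℓ : ℤ_[ℓ]) ^ m * ((ℓ : ℤ_[ℓ]) ^ m) ^ n :=
        pow_succ' _ _
      rw [h1, h2, mul_smul]
      calc (ℓ : ℤ_[ℓ]) ^ m • (((ℓ : ℤ_[ℓ]) ^ m) ^ n • fC ((fC ^ n) x))
          = (ℓ : ℤ_[ℓ]) ^ m • fC (((ℓ : ℤ_[ℓ]) ^ m) ^ n • (fC ^ n) x) := by rw [map_smul]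
        _ = (ℓ : ℤ_[ℓ]) ^ m • fC (a ^ n • x) := by rw [ih]
        _ = a ^ n • ((ℓ : ℤ_[ℓ]) ^ m • fC x) := by rw [map_smul, smul_comm]
        _ = a ^ n • (a • x) := by rw [hrel1]
        _ = a ^ (n + 1) • x := by rw [smul_smul, ← pow_succ]
  -- componentwise machinery
  set pr : ∀ i : I, (ℤ_[ℓ] ⊗[ℤ] ⨁ i, P i) →ₗ[ℤ_[ℓ]] (ℤ_[ℓ] ⊗[ℤ] P i) :=
    fun i => (DirectSum.component ℤ I P i).baseChange ℤ_[ℓ] with hpr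
  set q : ∀ i : I, AdicCompletion Il (ℤ_[ℓ] ⊗[ℤ] ⨁ i, P i) →ₗ[ℤ_[ℓ]]
      AdicCompletion Il (ℤ_[ℓ] ⊗[ℤ] P i) :=
    fun i => (AdicCompletion.map Il (pr i)).restrictScalars ℤ_[ℓ] with hq
  set g : ∀ i : I, P i →ₗ[ℤ] P i := fun i => (b i).constr ℤ (fun j => b i (σ i j)) with hg
  have hcommF : ∀ i, (DirectSum.component ℤ I P i).comp F
      = (g i).comp (DirectSum.component ℤ I P i) := by
    intro i
    refine DirectSum.linearMap_ext ℤ (fun i' => ?_)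
    refine (b i').ext (fun j => ?_)
    simp only [LinearMap.comp_apply]
    rw [hF i' j]
    by_cases h : i' = i
    · subst h
      rw [DirectSum.component.lof_self, DirectSum.component.lof_self]
      simp [hg, Module.Basis.constr_basis]
    · rw [DirectSum.component.of, DirectSum.component.of, dif_neg h, dif_neg h, map_zero]
  have hcommB : ∀ i, (pr i).comp (F.baseChange ℤ_[ℓ])
      = ((g i).baseChange ℤ_[ℓ]).comp (pr i) := by
    intro i
    have h := congrArg (LinearMap.baseChange ℤ_[ℓ]) (hcommF i)
    rw [LinearMap.baseChange_comp, LinearMap.baseChange_comp] at h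
    exact h
  have hqf : ∀ i y, q i (fC y) = AdicCompletion.map Il ((g i).baseChange ℤ_[ℓ]) (q i y) := by
    intro i y
    show AdicCompletion.map Il (pr i) (AdicCompletion.map Il (F.baseChange ℤ_[ℓ]) y) = _
    rw [AdicCompletion.map_comp_apply, hcommB i, ← AdicCompletion.map_comp_apply]
    rfl
  have hqn : ∀ i n, q i ((fC ^ n) x)
      = AdicCompletion.map Il (((g i) ^ n).baseChange ℤ_[ℓ]) (q i x) := by
    intro i n; induction n with
    | zero =>
      simp only [pow_zero, Module.End.one_eq_id, LinearMap.baseChange_id,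
        AdicCompletion.map_id]
      rfl
    | succ n ih =>
      have h1 : (fC ^ (n + 1)) x = fC ((fC ^ n) x) := by rw [pow_succ', Module.End.mul_apply]
      rw [h1, hqf, ih, AdicCompletion.map_comp_apply, ← LinearMap.baseChange_comp,
        ← Module.End.mul_eq_comp, ← pow_succ']
  have hgpow : ∀ i n j, ((g i) ^ n) (b i j) = b i (((σ i) ^ n) j) := by
    intro i n
    induction n with
    | zero => intro j; simp
    | succ n ih =>
      intro j
      calc ((g i) ^ (n + 1)) (b i j)
          = ((g i) ^ n) (g i (b i j)) := by rw [pow_succ, Module.End.mul_apply]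
        _ = ((g i) ^ n) (b i (σ i j)) := by
            congr 1
            simp [hg, Module.Basis.constr_basis]
        _ = b i (((σ i) ^ n) (σ i j)) := ih _
        _ = b i (((σ i) ^ (n + 1)) j) := by rw [← Equiv.Perm.mul_apply, ← pow_succ]
  have hgord : ∀ i, ((g i) ^ (orderOf (σ i))) = LinearMap.id := by
    intro i
    refine (b i).ext (fun j => ?_)
    rw [hgpow, pow_orderOf_eq_one]
    simp
  -- torsion-freeness of component completions
  have hBfree : ∀ (i : I) (k' : ℕ) (w : AdicCompletion Il (ℤ_[ℓ] ⊗[ℤ] P i)),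
      (ℓ : ℤ_[ℓ]) ^ k' • w = 0 → w = 0 := by
    intro i k' w hw
    haveI : Module.IsTorsionFree ℤ_[ℓ] (ℤ_[ℓ] ⊗[ℤ] P i) :=
      ((b i).baseChange ℤ_[ℓ]).isTorsionFree
    refine AdicCompletion.ext (fun r => ?_)
    obtain ⟨y, hy⟩ := Submodule.Quotient.mk_surjective _ (w.val (r + k'))
    have h1 : (ℓ : ℤ_[ℓ]) ^ k' • (w.val (r + k')) = 0 := by
      rw [← AdicCompletion.val_smul_apply, hw]
      rfl
    rw [← hy, ← Submodule.Quotient.mk_smul, Submodule.Quotient.mk_eq_zero] at h1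
    obtain ⟨z, hz⟩ := mem_pow_span_singleton_smul_top.mp h1
    have hy2 : y = (ℓ : ℤ_[ℓ]) ^ r • z := by
      have h2 : (ℓ : ℤ_[ℓ]) ^ k' • (y - (ℓ : ℤ_[ℓ]) ^ r • z) = 0 := by
        rw [smul_sub, hz, smul_smul, ← pow_add, add_comm r k', sub_self]
      rcases smul_eq_zero.mp h2 with h | h
      · exact absurd h (pow_ne_zero _ hℓ0)
      · exact (sub_eq_zero.mp h)
    have h3 : w.val r = AdicCompletion.transitionMap Il _ (Nat.le_add_right r k')
        (w.val (r + k')) := (AdicCompletion.transitionMap_comp_eval_apply _ _ _ w).symm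
    rw [h3, ← hy]
    show Submodule.Quotient.mk y = (0 : AdicCompletion Il (ℤ_[ℓ] ⊗[ℤ] P i)).val r
    rw [AdicCompletion.val_zero_apply, Submodule.Quotient.mk_eq_zero]
    exact mem_pow_span_singleton_smul_top.mpr ⟨z, hy2⟩
  -- detection of a nonzero component
  have hdet : ∃ i, q i x ≠ 0 := by
    by_contra hcon
    push_neg at hcon
    apply hx0
    refine AdicCompletion.ext (fun r => ?_)
    obtain ⟨y, hy⟩ := Submodule.Quotient.mk_surjective _ (x.val r)
    have hyi : ∀ i, ∃ z, pr i y = (ℓ : ℤ_[ℓ]) ^ r • z := by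
      intro i
      have h0 : (q i x).val r = 0 := by rw [hcon i]; rfl
      have h1 : (q i x).val r = (pr i).reduceModIdeal (Il ^ r) (x.val r) :=
        AdicCompletion.map_val_apply Il (pr i) x
      rw [← hy, LinearMap.reduceModIdeal_apply, h0] at h1
      rw [eq_comm, Submodule.Quotient.mk_eq_zero] at h1
      exact mem_pow_span_singleton_smul_top.mp h1
    -- claim A: conclude `y` is divisible by `ℓ^r`
    set ψ := TensorProduct.directSumRight ℤ ℤ_[ℓ] ℤ_[ℓ] P with hψ
    have hcompψ : ∀ (i : I) (w : ⨁ i, (ℤ_[ℓ] ⊗[ℤ] P i)),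
        pr i (ψ.symm w) = DirectSum.component ℤ I _ i w := by
      intro i w
      have hmaps : ((pr i).restrictScalars ℤ).comp
          ((ψ.symm : (⨁ i, (ℤ_[ℓ] ⊗[ℤ] P i)) →ₗ[ℤ_[ℓ]] (ℤ_[ℓ] ⊗[ℤ] ⨁ i, P i)).restrictScalars ℤ)
          = DirectSum.component ℤ I _ i := by
        refine DirectSum.linearMap_ext ℤ (fun i' => ?_)
        refine TensorProduct.ext' (fun t p => ?_)
        show (pr i) (ψ.symm (DirectSum.lof ℤ_[ℓ] I (fun i => ℤ_[ℓ] ⊗[ℤ] P i) i' (t ⊗ₜ[ℤ] p))) = DirectSum.component ℤ I (fun i => ℤ_[ℓ] ⊗[ℤ] P i) i (DirectSum.lof ℤ I (fun i => ℤ_[ℓ] ⊗[ℤ] P i) i' (t ⊗ₜ[ℤ] p))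
        rw [hψ]
        rw [TensorProduct.directSumRight_symm_lof_tmul]
        rw [hpr]
        dsimp only
        rw [LinearMap.baseChange_tmul]
        by_cases h : i' = i
        · subst h
          rw [DirectSum.component.lof_self, DirectSum.component.lof_self]
        · rw [DirectSum.component.of, DirectSum.component.of, dif_neg h, dif_neg h,
            TensorProduct.tmul_zero]
      exact LinearMap.congr_fun hmaps w
    choose zf hzf using hyi
    have hwi : ∀ i, (ψ y) i = (ℓ ^ r : ℕ) • zf i := by
      intro i
      have h5 : pr i (ψ.symm (ψ y)) = DirectSum.component ℤ I _ i (ψ y) := hcompψ i (ψ y)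
      rw [LinearEquiv.symm_apply_apply] at h5
      have h6 : DirectSum.component ℤ I _ i (ψ y) = (ψ y) i := rfl
      rw [h6] at h5
      rw [← h5, hzf i, ← Nat.cast_smul_eq_nsmul ℤ_[ℓ], Nat.cast_pow]
    have hZ : ψ y = (ℓ ^ r : ℕ) • (∑ i ∈ DFinsupp.support (ψ y),
        DirectSum.of (fun i => (ℤ_[ℓ] ⊗[ℤ] P i)) i (zf i)) := by
      conv_lhs => rw [← DirectSum.sum_support_of (x := ψ y)]
      rw [Finset.smul_sum]
      refine Finset.sum_congr rfl (fun i _ => ?_)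
      rw [hwi i, map_nsmul]
    have hy3 : ∃ z, y = (ℓ : ℤ_[ℓ]) ^ r • z := by
      refine ⟨ψ.symm (∑ i ∈ DFinsupp.support (ψ y),
        DirectSum.of (fun i => (ℤ_[ℓ] ⊗[ℤ] P i)) i (zf i)), ?_⟩
      conv_lhs => rw [← LinearEquiv.symm_apply_apply ψ y, hZ]
      rw [map_nsmul, ← Nat.cast_smul_eq_nsmul ℤ_[ℓ], Nat.cast_pow]
    show x.val r = (0 : AdicCompletion Il (ℤ_[ℓ] ⊗[ℤ] ⨁ i, P i)).val r
    rw [AdicCompletion.val_zero_apply, ← hy, Submodule.Quotient.mk_eq_zero]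
    exact mem_pow_span_singleton_smul_top.mpr hy3
  -- conclude
  obtain ⟨i, hqix⟩ := hdet
  set d := orderOf (σ i) with hd
  have hdpos : 0 < d := (isOfFinOrder_of_finite (σ i)).orderOf_pos
  have hfix : q i ((fC ^ d) x) = q i x := by
    rw [hqn i d, hgord i, LinearMap.baseChange_id, AdicCompletion.map_id]
    rfl
  have hkey : ((ℓ : ℤ_[ℓ]) ^ m) ^ d • (q i x) = a ^ d • (q i x) := by
    have h1 := congrArg (q i) (hreln d)
    rw [map_smul, map_smul, hfix] at h1
    exact h1
  have hzero : (a ^ d - ((ℓ : ℤ_[ℓ]) ^ m) ^ d) • (q i x) = 0 := by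
    rw [sub_smul, hkey, sub_self]
  by_cases hcc : a ^ d - ((ℓ : ℤ_[ℓ]) ^ m) ^ d = 0
  · refine ⟨d, hdpos, ?_⟩
    have he : a ^ d = ((ℓ : ℤ_[ℓ]) ^ m) ^ d := sub_eq_zero.mp hcc
    have h4 : (lam * (ℓ : ℚ_[ℓ]) ^ m) ^ d = ((ℓ : ℚ_[ℓ]) ^ m) ^ d := by
      rw [← hlama, ← map_pow, he, map_pow, map_pow, map_natCast]
    rw [mul_pow] at h4
    have h5 : ((ℓ : ℚ_[ℓ]) ^ m) ^ d ≠ 0 := pow_ne_zero _ (pow_ne_zero _ hℓ0K)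
    exact mul_right_cancel₀ h5 (h4.trans (one_mul _).symm)
  · exfalso
    have h6 := padic_unit_smul hcc hzero
    exact hqix (hBfree i _ _ h6)
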